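/- arXiv:2209.00301 — 3 statements merged into one kernel-verified Lean document; each statement's English description precedes it below -/
import Mathlib

section
/- Let Ψ be a real symmetric L×L matrix and χ ∈ ℝ^L. A vector β ∈ ℝ^L with βᵀβ = 1 is a global minimizer of f(β) = βᵀΨβ − 2χᵀβ over the unit sphere {β : βᵀβ = 1} if and only if there exists μ ∈ ℝ such that (Ψ + μI)β = χ and Ψ + μI is positive semi-definite. -/
open Matrix

private lemma lin_aux (a b c d : ℝ)
    (h : ∀ r : ℝ, 0 ≤ a*r + b * r^2 + c * r^3 + d * r^4) : -a ≤ 0 := by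
  have key : ∀ ε : ℝ, 0 < ε → -a ≤ 0 + ε := by
    intro ε hε
    set K : ℝ := |b| + |c| + |d| + 1 with hK
    have hK1 : (1:ℝ) ≤ K := by
      have := abs_nonneg b; have := abs_nonneg c; have := abs_nonneg d; linarith
    set r : ℝ := min 1 (ε / K) with hr
    have hr0 : 0 < r := lt_min one_pos (div_pos hε (by linarith))
    have hr1 : r ≤ 1 := min_le_left _ _
    have hrK : K * r ≤ ε := by
      have h' : r ≤ ε / K := min_le_right _ _
      calc K * r ≤ K * (ε / K) := by nlinarith
        _ = ε := by field_simp
    have h1 := h r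
    have p2 : (0:ℝ) < r^2 := by positivity
    have p3 : (0:ℝ) < r^3 := by positivity
    have q : (0:ℝ) ≤ r^2 - r^3 := by nlinarith
    have q' : (0:ℝ) ≤ r^2 - r^4 := by nlinarith
    have e_b : b * r^2 ≤ (|b|) * r^2 := mul_le_mul_of_nonneg_right (le_abs_self b) p2.le
    have e_c : c * r^3 ≤ (|c|) * r^2 := by
      nlinarith [mul_le_mul_of_nonneg_right (le_abs_self c) p3.le,
        mul_nonneg (abs_nonneg c) q]
    have e_d : d * r^4 ≤ (|d|) * r^2 := by
      nlinarith [mul_le_mul_of_nonneg_right (le_abs_self d) (by positivity : (0:ℝ) ≤ r^4),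
        mul_nonneg (abs_nonneg d) q']
    have step : (-a) * r ≤ ((K-1)*r) * r := by nlinarith
    have : -a ≤ (K-1)*r := le_of_mul_le_mul_right step hr0
    nlinarith
  linarith [le_of_forall_pos_le_add key]

private lemma lin_zero (a b c d : ℝ)
    (h : ∀ r : ℝ, 0 ≤ a*r + b * r^2 + c * r^3 + d * r^4) : a = 0 := by
  have h1 := lin_aux a b c d h
  have h2 := lin_aux (-a) b (-c) d (by intro r; have := h (-r); ring_nf at this ⊢; linarith)
  linarith

private lemma quad_psd (C D E : ℝ) (hC : 0 ≤ C)
    (h : ∀ r : ℝ, r ≠ 0 → 0 ≤ C*r^2 - 2*D*r + E) :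
    ∀ a b : ℝ, 0 ≤ C*a^2 + 2*D*(a*b) + E*b^2 := by
  have hE : 0 ≤ E := by
    have key : ∀ ε : ℝ, 0 < ε → -E ≤ 0 + ε := by
      intro ε hε
      set r : ℝ := min 1 (ε / (C+1)) with hr
      have hr0 : 0 < r := lt_min one_pos (div_pos hε (by linarith))
      have hr1 : r ≤ 1 := min_le_left _ _
      have hrK : (C+1) * r ≤ ε := by
        have h' : r ≤ ε / (C+1) := min_le_right _ _
        calc (C+1) * r ≤ (C+1) * (ε / (C+1)) := by nlinarith
          _ = ε := by field_simp
      have h1 := h r hr0.ne'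
      have h2 := h (-r) (by intro hh; linarith [neg_eq_zero.mp hh] : -r ≠ 0)
      nlinarith
    linarith [le_of_forall_pos_le_add key]
  have hall : ∀ x : ℝ, 0 ≤ C * (x*x) + (-(2*D)) * x + E := by
    intro x
    rcases eq_or_ne x 0 with rfl | hx
    · simpa using hE
    · have := h x hx; nlinarith
  have hdisc := discrim_le_zero hall
  rw [discrim] at hdisc
  intro a b
  nlinarith [sq_nonneg (C*a^2 - E*b^2), mul_nonneg hC (sq_nonneg a),
    mul_nonneg hE (sq_nonneg b),
    mul_nonneg (by nlinarith : (0:ℝ) ≤ 4*C*E - 4*D^2) (sq_nonneg (a*b))]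

/-- A unit vector `β` minimizes `f(β) = βᵀΨβ − 2χᵀβ` over the unit sphere iff there
exists `μ ∈ ℝ` with `(Ψ + μI)β = χ` and `Ψ + μI` positive semi-definite. -/
theorem sphere_min_iff_lagrange {L : ℕ} (Ψ : Matrix (Fin L) (Fin L) ℝ) (hΨ : Ψ.IsSymm)
    (χ β : Fin L → ℝ) (hβ : β ⬝ᵥ β = 1) :
    (∀ β' : Fin L → ℝ, β' ⬝ᵥ β' = 1 →
        β ⬝ᵥ Ψ.mulVec β - 2 * (χ ⬝ᵥ β) ≤ β' ⬝ᵥ Ψ.mulVec β' - 2 * (χ ⬝ᵥ β')) ↔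
    ∃ μ : ℝ, (Ψ + μ • (1 : Matrix (Fin L) (Fin L) ℝ)).mulVec β = χ ∧
      ∀ x : Fin L → ℝ, 0 ≤ x ⬝ᵥ (Ψ + μ • (1 : Matrix (Fin L) (Fin L) ℝ)).mulVec x := by
  have hsym : ∀ v w : Fin L → ℝ, v ⬝ᵥ Ψ *ᵥ w = w ⬝ᵥ Ψ *ᵥ v := by
    intro v w
    rw [dotProduct_mulVec, ← Matrix.mulVec_transpose, hΨ.eq, dotProduct_comm]
  constructor
  · intro hmin
    have hpoly : ∀ u : Fin L → ℝ, u ⬝ᵥ u = 1 → β ⬝ᵥ u = 0 → ∀ r : ℝ,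
        0 ≤ (β ⬝ᵥ Ψ *ᵥ u - χ ⬝ᵥ u) * r
          + (u ⬝ᵥ Ψ *ᵥ u - β ⬝ᵥ Ψ *ᵥ β + χ ⬝ᵥ β) * r^2
          + (-(β ⬝ᵥ Ψ *ᵥ u) - χ ⬝ᵥ u) * r^3 + (χ ⬝ᵥ β) * r^4 := by
      intro u hu hbu r
      have hub : u ⬝ᵥ β = 0 := by rwa [dotProduct_comm]
      have hsymu := hsym u β
      have hr2 : (0:ℝ) < 1 + r^2 := by positivity
      set β' : Fin L → ℝ := ((1+r^2)⁻¹ * (1 - r^2)) • β + ((1+r^2)⁻¹ * (2*r)) • u with hβ'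
      have h1 : β' ⬝ᵥ β' = 1 := by
        simp only [hβ', dotProduct_add, add_dotProduct, smul_dotProduct, dotProduct_smul,
          smul_eq_mul, hβ, hu, hbu, hub]
        field_simp
        ring
      have h2 := hmin β' h1
      have key : ((β ⬝ᵥ Ψ *ᵥ u - χ ⬝ᵥ u) * r
          + (u ⬝ᵥ Ψ *ᵥ u - β ⬝ᵥ Ψ *ᵥ β + χ ⬝ᵥ β) * r^2
          + (-(β ⬝ᵥ Ψ *ᵥ u) - χ ⬝ᵥ u) * r^3 + (χ ⬝ᵥ β) * r^4) * 4
          = (1+r^2)^2 * ((β' ⬝ᵥ Ψ *ᵥ β' - 2*(χ ⬝ᵥ β')) - (β ⬝ᵥ Ψ *ᵥ β - 2*(χ ⬝ᵥ β))) := by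
        simp only [hβ', dotProduct_add, add_dotProduct, smul_dotProduct, dotProduct_smul,
          Matrix.mulVec_add, Matrix.mulVec_smul, smul_eq_mul, hsymu]
        field_simp
        ring
      have h3 : 0 ≤ (1+r^2)^2 * ((β' ⬝ᵥ Ψ *ᵥ β' - 2*(χ ⬝ᵥ β')) - (β ⬝ᵥ Ψ *ᵥ β - 2*(χ ⬝ᵥ β))) :=
        mul_nonneg (by positivity) (by linarith)
      linarith [key, h3]
    have hm : 0 ≤ χ ⬝ᵥ β := by
      have h1 : (-β) ⬝ᵥ (-β) = (1:ℝ) := by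
        simpa [neg_dotProduct, dotProduct_neg] using hβ
      have h2 := hmin (-β) h1
      simp only [Matrix.mulVec_neg, dotProduct_neg, neg_dotProduct, neg_neg] at h2
      linarith
    have hstatu : ∀ u : Fin L → ℝ, u ⬝ᵥ u = 1 → β ⬝ᵥ u = 0 → β ⬝ᵥ Ψ *ᵥ u = χ ⬝ᵥ u := by
      intro u hu hbu
      have := lin_zero _ _ _ _ (hpoly u hu hbu)
      linarith
    set μ : ℝ := χ ⬝ᵥ β - β ⬝ᵥ Ψ *ᵥ β with hμ
    have hstat : (Ψ + μ • (1 : Matrix (Fin L) (Fin L) ℝ)) *ᵥ β = χ := by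
      set w : Fin L → ℝ := Ψ *ᵥ β + μ • β - χ with hw
      have hβw : β ⬝ᵥ w = 0 := by
        simp only [hw, dotProduct_sub, dotProduct_add, dotProduct_smul, smul_eq_mul, hβ]
        rw [dotProduct_comm β χ, hμ]; ring
      have hww : w ⬝ᵥ w = 0 := by
        by_contra hne
        have hnn : 0 ≤ w ⬝ᵥ w := Finset.sum_nonneg fun i _ => mul_self_nonneg _
        have hpos : 0 < w ⬝ᵥ w := lt_of_le_of_ne hnn (Ne.symm hne)
        set t : ℝ := w ⬝ᵥ w with ht
        set u : Fin L → ℝ := (Real.sqrt t)⁻¹ • w with hu'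
        have hst : 0 < Real.sqrt t := Real.sqrt_pos.mpr hpos
        have hu : u ⬝ᵥ u = 1 := by
          simp only [hu', smul_dotProduct, dotProduct_smul, smul_eq_mul, ← ht]
          rw [show (Real.sqrt t)⁻¹ * ((Real.sqrt t)⁻¹ * t) = t / (Real.sqrt t * Real.sqrt t) by
            field_simp]
          rw [Real.mul_self_sqrt hpos.le]
          field_simp
        have hbu : β ⬝ᵥ u = 0 := by
          simp [hu', dotProduct_smul, smul_eq_mul, hβw]
        have h1 := hstatu u hu hbu
        have h2 : u ⬝ᵥ w = (Real.sqrt t)⁻¹ * t := by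
          simp [hu', smul_dotProduct, smul_eq_mul, ← ht]
        have h3 : u ⬝ᵥ w = 0 := by
          simp only [hw, dotProduct_sub, dotProduct_add, dotProduct_smul, smul_eq_mul]
          rw [hsym u β, dotProduct_comm u β, dotProduct_comm u χ, hbu, h1]; ring
        rw [h2] at h3
        have : (Real.sqrt t)⁻¹ * t ≠ 0 := by positivity
        exact this h3
      have hwz : w = 0 := dotProduct_self_eq_zero.mp hww
      have hfin : Ψ *ᵥ β + μ • β = χ := by
        rw [hw] at hwz; rwa [sub_eq_zero] at hwz
      simpa [Matrix.add_mulVec, Matrix.smul_mulVec, Matrix.one_mulVec] using hfin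
    refine ⟨μ, hstat, ?_⟩
    intro x
    set a : ℝ := β ⬝ᵥ x with ha
    set w : Fin L → ℝ := x - a • β with hw
    have hβw : β ⬝ᵥ w = 0 := by
      simp [hw, dotProduct_sub, dotProduct_smul, smul_eq_mul, hβ, ← ha]
    rcases eq_or_ne w 0 with hwz | hwne
    · have hx : x = a • β := by
        rw [hw] at hwz; rw [sub_eq_zero] at hwz; exact hwz
      rw [hx]
      simp only [Matrix.mulVec_smul, dotProduct_smul, smul_dotProduct, smul_eq_mul, hstat]
      rw [dotProduct_comm β χ]
      nlinarith [hm, sq_nonneg a]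
    · have hnn : 0 ≤ w ⬝ᵥ w := Finset.sum_nonneg fun i _ => mul_self_nonneg _
      have hpos : 0 < w ⬝ᵥ w := lt_of_le_of_ne hnn (fun hh => hwne (dotProduct_self_eq_zero.mp hh.symm))
      set t : ℝ := w ⬝ᵥ w with ht
      set u : Fin L → ℝ := (Real.sqrt t)⁻¹ • w with hu'
      have hst : 0 < Real.sqrt t := Real.sqrt_pos.mpr hpos
      have hu : u ⬝ᵥ u = 1 := by
        simp only [hu', smul_dotProduct, dotProduct_smul, smul_eq_mul, ← ht]
        rw [show (Real.sqrt t)⁻¹ * ((Real.sqrt t)⁻¹ * t) = t / (Real.sqrt t * Real.sqrt t) by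
          field_simp]
        rw [Real.mul_self_sqrt hpos.le]
        field_simp
      have hbu : β ⬝ᵥ u = 0 := by
        simp [hu', dotProduct_smul, smul_eq_mul, hβw]
      have hub : u ⬝ᵥ β = 0 := by rwa [dotProduct_comm]
      have hD := hstatu u hu hbu
      have hfact : ∀ r : ℝ, r ≠ 0 →
          0 ≤ (χ ⬝ᵥ β)*r^2 - 2*(β ⬝ᵥ Ψ *ᵥ u)*r + (u ⬝ᵥ Ψ *ᵥ u + μ) := by
        intro r hr
        have hp := hpoly u hu hbu r
        have hr2 : (0:ℝ) < r^2 := by positivity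
        have key : ((χ ⬝ᵥ β)*r^2 - 2*(β ⬝ᵥ Ψ *ᵥ u)*r + (u ⬝ᵥ Ψ *ᵥ u + μ)) * r^2
            = (β ⬝ᵥ Ψ *ᵥ u - χ ⬝ᵥ u) * r
              + (u ⬝ᵥ Ψ *ᵥ u - β ⬝ᵥ Ψ *ᵥ β + χ ⬝ᵥ β) * r^2
              + (-(β ⬝ᵥ Ψ *ᵥ u) - χ ⬝ᵥ u) * r^3 + (χ ⬝ᵥ β) * r^4 := by
          rw [hμ, hD]; ring
        nlinarith [key, hp, hr2]
      have hquad := quad_psd (χ ⬝ᵥ β) (β ⬝ᵥ Ψ *ᵥ u) (u ⬝ᵥ Ψ *ᵥ u + μ) hm hfact a (Real.sqrt t)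
      have hbu' : (Real.sqrt t) • u = w := by
        rw [hu', smul_smul]
        rw [mul_inv_cancel₀ hst.ne']
        simp
      have hx : x = a • β + (Real.sqrt t) • u := by
        rw [hbu', hw]; abel
      rw [hx]
      simp only [Matrix.add_mulVec, Matrix.smul_mulVec, Matrix.one_mulVec,
        Matrix.mulVec_add, Matrix.mulVec_smul, dotProduct_add, add_dotProduct,
        smul_dotProduct, dotProduct_smul, smul_eq_mul, hsym u β, hβ, hu, hbu, hub]
      rw [hμ] at hquad ⊢
      nlinarith [hquad]
  · rintro ⟨μ, hstat, hpsd⟩ β' hβ'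
    have key := hpsd (β' - β)
    simp only [Matrix.add_mulVec, Matrix.smul_mulVec, Matrix.one_mulVec,
      Matrix.mulVec_sub, dotProduct_sub, sub_dotProduct, dotProduct_add, add_dotProduct, dotProduct_smul,
      smul_dotProduct, smul_eq_mul] at key
    have hχ : Ψ *ᵥ β + μ • β = χ := by
      simpa [Matrix.add_mulVec, Matrix.smul_mulVec, Matrix.one_mulVec] using hstat
    have hχβ' : χ ⬝ᵥ β' = β ⬝ᵥ Ψ *ᵥ β' + μ * (β ⬝ᵥ β') := by
      rw [← hχ]
      simp only [add_dotProduct, smul_dotProduct, smul_eq_mul]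
      rw [dotProduct_mulVec, ← Matrix.mulVec_transpose, hΨ.eq]
    have hχβ : χ ⬝ᵥ β = β ⬝ᵥ Ψ *ᵥ β + μ := by
      rw [← hχ]
      simp only [add_dotProduct, smul_dotProduct, smul_eq_mul]
      rw [dotProduct_mulVec, ← Matrix.mulVec_transpose, hΨ.eq, dotProduct_comm β β, hβ, mul_one]
    have hcomm : β' ⬝ᵥ β = β ⬝ᵥ β' := dotProduct_comm _ _
    have hs := hsym β' β
    rw [hχβ', hχβ]
    rw [hβ, hβ', hcomm, hs] at key
    linarith [key]
end

section
/- Let g : ℝ → ℝ, g(μ) = Σ_{l=1}^{L} χ̃_l²/(ε_l + μ)² with all χ̃_l ≠ 0 and ε₁ = min_l ε_l. On the interval I = [√(Σ_{l∈E} χ̃_l²) − ε₁, ‖χ̃‖₂ − ε₁], where E = {l : ε_l = ε₁}, there exists exactly one μ⋆ ∈ I with g(μ⋆) = 1, and for this μ⋆ all ε_l + μ⋆ > 0. -/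
/-!
For `μ > -ε₁` every denominator `ε_l + μ` is positive, so `g = secularFn χ̃ ε` is continuous
and strictly decreasing there. At the left endpoint the terms with `l ∈ E` alone already sum to
`1`; at the right endpoint every `(ε_l + μ)²` is at least `‖χ̃‖₂²`, so `g ≤ 1`. The intermediate
value theorem gives a root, strict monotonicity its uniqueness, and the left endpoint lies above
`-ε₁` because `E` contains a nonzero `χ̃_l`.
-/

open Finset

section Secular

variable {ι : Type*} {χ ε : ι → ℝ} {e : ℝ}

lemma add_pos_of_forall_le (hmin : ∀ l, e ≤ ε l) {μ : ℝ} (hμ : μ ∈ Set.Ioi (-e)) (l : ι) :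
    0 < ε l + μ := by
  linarith [hmin l, Set.mem_Ioi.1 hμ]

variable [Fintype ι]

variable (χ ε) in
noncomputable def secularFn (μ : ℝ) : ℝ := ∑ l, χ l ^ 2 / (ε l + μ) ^ 2

lemma continuousOn_secularFn (hmin : ∀ l, e ≤ ε l) :
    ContinuousOn (secularFn χ ε) (Set.Ioi (-e)) :=
  continuousOn_finsetSum _ fun l _ =>
    continuousOn_const.div (by fun_prop) fun _ hμ =>
      pow_ne_zero 2 (add_pos_of_forall_le hmin hμ l).ne'

lemma strictAntiOn_secularFn [Nonempty ι] (hχ : ∀ l, χ l ≠ 0) (hmin : ∀ l, e ≤ ε l) :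
    StrictAntiOn (secularFn χ ε) (Set.Ioi (-e)) := by
  intro μ hμ ν _ hμν
  refine sum_lt_sum_of_nonempty univ_nonempty fun l _ => ?_
  have hpos := add_pos_of_forall_le hmin hμ l
  exact div_lt_div_of_pos_left (pow_two_pos_of_ne_zero (hχ l)) (by positivity) (by gcongr)

lemma one_le_secularFn_sqrt_sub
    (hE : 0 < ∑ l ∈ univ.filter (fun l => ε l = e), χ l ^ 2) :
    1 ≤ secularFn χ ε (√(∑ l ∈ univ.filter (fun l => ε l = e), χ l ^ 2) - e) := by
  set SE := ∑ l ∈ univ.filter (fun l => ε l = e), χ l ^ 2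
  calc (1 : ℝ) = ∑ l ∈ univ.filter (fun l => ε l = e), χ l ^ 2 / (ε l + (√SE - e)) ^ 2 := by
        rw [sum_congr rfl fun l hl => by
            rw [(mem_filter.1 hl).2, add_sub_cancel, Real.sq_sqrt hE.le], ← sum_div, div_self hE.ne']
    _ ≤ secularFn χ ε (√SE - e) :=
        sum_le_sum_of_subset_of_nonneg (filter_subset _ _) fun _ _ _ => by positivity

lemma secularFn_sqrt_sub_le_one (hmin : ∀ l, e ≤ ε l) (hS : 0 < ∑ l, χ l ^ 2) :
    secularFn χ ε (√(∑ l, χ l ^ 2) - e) ≤ 1 := by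
  set S := ∑ l, χ l ^ 2
  calc secularFn χ ε (√S - e) ≤ ∑ l, χ l ^ 2 / S := by
        refine sum_le_sum fun l _ => div_le_div_of_nonneg_left (sq_nonneg _) hS ?_
        have h : √S ≤ ε l + (√S - e) := by linarith [hmin l]
        calc S = √S ^ 2 := (Real.sq_sqrt hS.le).symm
          _ ≤ (ε l + (√S - e)) ^ 2 := by gcongr
    _ = 1 := by rw [← sum_div, div_self hS.ne']

end Secular

/-- On the interval `I = [√(Σ_{l∈E} χ̃_l²) − ε₁, ‖χ̃‖₂ − ε₁]`, with `E = {l : ε_l = ε₁}`,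
the equation `g(μ) = Σ_l χ̃_l²/(ε_l + μ)² = 1` has exactly one solution `μ⋆`, and at this
solution `ε_l + μ⋆ > 0` for all `l`. -/
theorem unique_mu_in_interval {L : ℕ} (hL : 0 < L) (ε χ : Fin L → ℝ)
    (hmin : ∀ l, ε ⟨0, hL⟩ ≤ ε l) (hχ : ∀ l, χ l ≠ 0) :
    (∃! μ : ℝ,
        μ ∈ Set.Icc
          (Real.sqrt (∑ l ∈ Finset.univ.filter (fun l => ε l = ε ⟨0, hL⟩), (χ l) ^ 2)
            - ε ⟨0, hL⟩)
          (Real.sqrt (∑ l : Fin L, (χ l) ^ 2) - ε ⟨0, hL⟩) ∧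
        (∑ l : Fin L, (χ l) ^ 2 / (ε l + μ) ^ 2) = 1) ∧
    (∀ μ : ℝ,
        μ ∈ Set.Icc
          (Real.sqrt (∑ l ∈ Finset.univ.filter (fun l => ε l = ε ⟨0, hL⟩), (χ l) ^ 2)
            - ε ⟨0, hL⟩)
          (Real.sqrt (∑ l : Fin L, (χ l) ^ 2) - ε ⟨0, hL⟩) →
        (∑ l : Fin L, (χ l) ^ 2 / (ε l + μ) ^ 2) = 1 →
        ∀ l, 0 < ε l + μ) := by
  set e := ε ⟨0, hL⟩
  set SE := ∑ l ∈ univ.filter (fun l => ε l = e), χ l ^ 2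
  have hE : 0 < SE := sum_pos (fun l _ => pow_two_pos_of_ne_zero (hχ l)) ⟨⟨0, hL⟩, by simp [e]⟩
  have hES : SE ≤ ∑ l, χ l ^ 2 :=
    sum_le_sum_of_subset_of_nonneg (filter_subset _ _) fun l _ _ => sq_nonneg (χ l)
  have hab : √SE - e ≤ √(∑ l, χ l ^ 2) - e := by gcongr
  have hI : Set.Icc (√SE - e) (√(∑ l, χ l ^ 2) - e) ⊆ Set.Ioi (-e) := fun μ hμ =>
    Set.mem_Ioi.2 (by linarith [hμ.1, Real.sqrt_pos.2 hE])
  have : Nonempty (Fin L) := ⟨⟨0, hL⟩⟩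
  obtain ⟨μ, hμ, hμ1⟩ := intermediate_value_Icc' hab ((continuousOn_secularFn hmin).mono hI)
    ⟨secularFn_sqrt_sub_le_one hmin (hE.trans_le hES), one_le_secularFn_sqrt_sub hE⟩
  refine ⟨⟨μ, ⟨hμ, hμ1⟩, fun ν hν => ?_⟩, fun ν hν _ => add_pos_of_forall_le hmin (hI hν)⟩
  exact (strictAntiOn_secularFn hχ hmin).injOn (hI hν.1) (hI hμ) (hν.2.trans hμ1.symm)
end

section
/- Fractional programming equivalence (single-ratio, Lagrangian dual transform step): for fixed real a > 0 (signal power) and b > 0 (interference-plus-noise power), max over ι ≥ 0 of [log₂(1 + ι) − ι + (1 + ι)·a/(a + b)] is attained at ι⋆ = a/b, and the attained value equals log₂(1 + a/b). -/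
/-- Lagrangian dual transform, scalar identity: for `a, b > 0`, the function
`h(ι) = ln(1+ι) − ι + (1+ι)·a/(a+b)` over `ι ≥ 0` attains its maximum uniquely at
`ι⋆ = a/b`, with maximum value `ln(1 + a/b)`. -/
theorem dual_transform_scalar (a b : ℝ) (ha : 0 < a) (hb : 0 < b) :
    (Real.log (1 + a / b) - a / b + (1 + a / b) * a / (a + b) =
      Real.log (1 + a / b)) ∧
    (∀ ι : ℝ, 0 ≤ ι →
      Real.log (1 + ι) - ι + (1 + ι) * a / (a + b) ≤ Real.log (1 + a / b)) ∧
    (∀ ι : ℝ, 0 ≤ ι →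
      Real.log (1 + ι) - ι + (1 + ι) * a / (a + b) = Real.log (1 + a / b) →
      ι = a / b) := by
  have hab : 0 < a + b := by linarith
  have hq : 0 < 1 + a / b := by positivity
  have key : ∀ ι : ℝ, 0 ≤ ι →
      Real.log (1 + ι) = Real.log ((1 + ι) * b / (a + b)) + Real.log (1 + a / b) ∧
      ((1 + ι) * b / (a + b)) - 1 = ι - (1 + ι) * a / (a + b) := by
    intro ι hι
    have hx : 0 < (1 + ι) * b / (a + b) := by positivity
    constructor
    · have heq : (1 + ι) = ((1 + ι) * b / (a + b)) * (1 + a / b) := by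
        field_simp
        ring
      have hm := Real.log_mul (ne_of_gt hx) (ne_of_gt hq)
      rw [← heq] at hm
      exact hm
    · field_simp
      ring
  refine ⟨?_, ?_, ?_⟩
  · field_simp
    ring
  · intro ι hι
    obtain ⟨h1, h2⟩ := key ι hι
    have hx : 0 < (1 + ι) * b / (a + b) := by positivity
    have h3 := Real.log_le_sub_one_of_pos hx
    linarith
  · intro ι hι heq
    obtain ⟨h1, h2⟩ := key ι hι
    have hx : 0 < (1 + ι) * b / (a + b) := by positivity
    by_cases hone : (1 + ι) * b / (a + b) = 1
    · have : (1 + ι) * b = a + b := by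
        field_simp at hone
        linarith
      field_simp
      linarith
    · have h3 := Real.log_lt_sub_one_of_pos hx hone
      linarith
end
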